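/- arXiv:1711.01637 — 6 statements merged into one kernel-verified Lean document; each statement's English description precedes it below -/
import Mathlib

section
/- Let η ∈ ℝⁿ with η > 0 componentwise, r ∈ ℝ₊ⁿ, and let c₁,…,cₙ be independent random variables with cᵢ uniformly distributed on an interval of length ηᵢ. Define N(c, r) as the number of grid points p ∈ ηℤⁿ (i.e., pᵢ = kᵢηᵢ for integers kᵢ) with p ∈ [c − r, c + r] (componentwise). Then the expected value of N(c, r) equals ∏ᵢ₌₁ⁿ (2rᵢ/ηᵢ). -/
open MeasureTheory

/-- Number of grid points `p ∈ ηℤⁿ` with `c - r ≤ p ≤ c + r` componentwise. -/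
noncomputable def NcountGrid {n : ℕ} (η c r : Fin n → ℝ) : ℕ :=
  ∏ i, (Finset.Icc ⌈(c i - r i) / η i⌉ ⌊(c i + r i) / η i⌋).card

/-!
The count factorises over the coordinates, and by independence so does its expectation.
In one coordinate, the number of integers in `[t - ρ, t + ρ]` is
`2ρ + 1 - fract (t + ρ) - fract (ρ - t)`, and as `t` runs over a full period each fractional
part averages to `1/2`.
-/

open Set Finset

lemma card_Icc_ceil_floor_eq (t : ℝ) {ρ : ℝ} (hρ : 0 ≤ ρ) :
    (#(Icc ⌈t - ρ⌉ ⌊t + ρ⌋) : ℝ)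
      = 2 * ρ + 1 - Int.fract (t + ρ) - Int.fract (-t + ρ) := by
  have hle : ⌈t - ρ⌉ ≤ ⌊t + ρ⌋ + 1 :=
    (Int.ceil_le_floor_add_one _).trans (by gcongr; linarith)
  have hcard : (#(Icc ⌈t - ρ⌉ ⌊t + ρ⌋) : ℝ) = ⌊t + ρ⌋ + 1 - ⌈t - ρ⌉ := by
    exact_mod_cast Int.card_Icc_of_le _ _ hle
  have hceil : (⌈t - ρ⌉ : ℝ) = -⌊-t + ρ⌋ := by
    rw [show -t + ρ = -(t - ρ) by ring, Int.floor_neg]; push_cast; ring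
  linarith [Int.floor_add_fract (t + ρ), Int.floor_add_fract (-t + ρ)]

lemma integral_fract_add_one (b : ℝ) : ∫ x in b..b + 1, Int.fract x = 1 / 2 := by
  have hper : Function.Periodic (Int.fract : ℝ → ℝ) 1 := Int.fract_add_one
  rw [hper.intervalIntegral_add_eq b 0, zero_add]
  have hfract : ∫ x in (0 : ℝ)..1, Int.fract x = ∫ x in (0 : ℝ)..1, x := by
    simp only [intervalIntegral.integral_of_le zero_le_one, integral_Ioc_eq_integral_Ioo]
    exact setIntegral_congr_fun measurableSet_Ioo fun x hx =>
      Int.fract_eq_self.2 ⟨hx.1.le, hx.2⟩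
  rw [hfract, integral_id]
  norm_num

lemma integral_fract_div_add {η : ℝ} (hη : 0 < η) (a s : ℝ) :
    ∫ x in a..a + η, Int.fract (x / η + s) = η / 2 := by
  rw [intervalIntegral.integral_comp_div (fun y => Int.fract (y + s)) hη.ne',
    intervalIntegral.integral_comp_add_right, add_div, div_self hη.ne', add_right_comm,
    integral_fract_add_one, smul_eq_mul]
  ring

lemma integral_fract_neg_div_add {η : ℝ} (hη : 0 < η) (a s : ℝ) :
    ∫ x in a..a + η, Int.fract (-x / η + s) = η / 2 := by
  rw [intervalIntegral.integral_comp_neg (fun x => Int.fract (x / η + s)),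
    show -a = -(a + η) + η by ring, integral_fract_div_add hη]

lemma intervalIntegrable_fract_comp {f : ℝ → ℝ} (hf : Measurable f) (a b : ℝ) :
    IntervalIntegrable (fun x => Int.fract (f x)) volume a b := by
  refine (intervalIntegrable_const (c := (1 : ℝ))).mono_fun
    (measurable_fract.comp hf).aestronglyMeasurable (ae_of_all _ fun x => ?_)
  simp only [Real.norm_of_nonneg (Int.fract_nonneg _), norm_one]
  exact (Int.fract_lt_one _).le

lemma integral_card_Icc_ceil_floor {η : ℝ} (hη : 0 < η) {r : ℝ} (hr : 0 ≤ r) (a : ℝ) :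
    ∫ c in a..a + η, (#(Icc ⌈(c - r) / η⌉ ⌊(c + r) / η⌋) : ℝ) = 2 * r := by
  have hcount : ∀ c, (#(Icc ⌈(c - r) / η⌉ ⌊(c + r) / η⌋) : ℝ)
      = 2 * (r / η) + 1 - Int.fract (c / η + r / η) - Int.fract (-c / η + r / η) := fun c => by
    rw [sub_div, add_div, card_Icc_ceil_floor_eq _ (by positivity), neg_div]
  simp_rw [hcount]
  rw [intervalIntegral.integral_sub (intervalIntegrable_const.sub
      (intervalIntegrable_fract_comp (by fun_prop) _ _))
      (intervalIntegrable_fract_comp (by fun_prop) _ _),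
    intervalIntegral.integral_sub intervalIntegrable_const
      (intervalIntegrable_fract_comp (by fun_prop) _ _),
    intervalIntegral.integral_const, integral_fract_div_add hη, integral_fract_neg_div_add hη,
    smul_eq_mul]
  field_simp
  ring

lemma integral_smul_restrict_Icc {η : ℝ} (hη : 0 ≤ η) (a : ℝ) (f : ℝ → ℝ) :
    ∫ x, f x ∂((ENNReal.ofReal η)⁻¹ • volume.restrict (Icc a (a + η)))
      = η⁻¹ * ∫ x in a..a + η, f x := by
  rw [integral_smul_measure, ENNReal.toReal_inv, ENNReal.toReal_ofReal hη,
    integral_Icc_eq_integral_Ioc, ← intervalIntegral.integral_of_le (by linarith), smul_eq_mul]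

theorem stmt2 {n : ℕ} (η r a : Fin n → ℝ) (hη : ∀ i, 0 < η i)
    (hr : ∀ i, 0 ≤ r i)
    -- `μ` is the joint law of the independent uniform random variables `cᵢ`,
    -- `cᵢ` uniformly distributed on an interval of length `ηᵢ` starting at `a i`:
    (μ : Measure (Fin n → ℝ))
    (hμ : μ = Measure.pi fun i =>
      (ENNReal.ofReal (η i))⁻¹ • volume.restrict (Set.Icc (a i) (a i + η i))) :
    ∫ c, (NcountGrid η c r : ℝ) ∂μ = ∏ i, 2 * r i / η i := by
  subst hμ
  have : ∀ i, IsFiniteMeasure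
      ((ENNReal.ofReal (η i))⁻¹ • volume.restrict (Icc (a i) (a i + η i))) :=
    fun i => Measure.smul_finite _ (ENNReal.inv_ne_top.2 (ENNReal.ofReal_pos.2 (hη i)).ne')
  simp only [NcountGrid, Nat.cast_prod]
  rw [integral_fintype_prod_eq_prod
    fun i c => (#(Icc ⌈(c - r i) / η i⌉ ⌊(c + r i) / η i⌋) : ℝ)]
  refine prod_congr rfl fun i _ => ?_
  rw [integral_smul_restrict_Icc (hη i).le, integral_card_Icc_ceil_floor (hη i) (hr i)]
  field_simp
end

section
/- Let n ≥ 1, A ∈ ℝ₊^{n×n}, p ∈ ℝ₊ⁿ, and define g : ℝⁿ → ℝ by g(x) = ∏ᵢ₌₁ⁿ e^{−xᵢ}(pᵢ + Σⱼ A_{i,j} e^{xⱼ}). Then g is convex on ℝⁿ. -/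
noncomputable def g {n : ℕ} (A : Matrix (Fin n) (Fin n) ℝ) (p : Fin n → ℝ)
    (x : Fin n → ℝ) : ℝ :=
  ∏ i, Real.exp (-(x i)) * (p i + ∑ j, A i j * Real.exp (x j))

/-!
Expanding the product, `g` becomes a sum, with nonnegative coefficients, of exponentials of
linear forms in `x`: indeed `e^{-xᵢ}(pᵢ + Σⱼ Aᵢⱼ e^{xⱼ}) = pᵢ e^{-xᵢ} + Σⱼ Aᵢⱼ e^{xⱼ - xᵢ}`, and such
sums are closed under products since `e^{ℓ x} e^{ℓ' x} = e^{(ℓ + ℓ') x}`. Each term is a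
nonnegative multiple of `exp` composed with a linear map, hence convex.
-/

open Real

theorem convexOn_finset_sum {𝕜 E β ι : Type*} [Semiring 𝕜] [PartialOrder 𝕜] [AddCommMonoid E]
    [AddCommMonoid β] [PartialOrder β] [IsOrderedAddMonoid β] [SMul 𝕜 E] [Module 𝕜 β]
    {s : Set E} (hs : Convex 𝕜 s) (t : Finset ι) {f : ι → E → β}
    (hf : ∀ i ∈ t, ConvexOn 𝕜 s (f i)) : ConvexOn 𝕜 s (∑ i ∈ t, f i) :=
  Finset.sum_induction f (ConvexOn 𝕜 s) (fun _ _ => ConvexOn.add) (convexOn_const 0 hs) hf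

section NonnegExpSum

variable {E : Type*} [AddCommGroup E] [Module ℝ E]

def IsNonnegExpSum (f : E → ℝ) : Prop :=
  ∃ (κ : Type) (_ : Fintype κ) (c : κ → ℝ) (ℓ : κ → E →ₗ[ℝ] ℝ),
    (∀ k, 0 ≤ c k) ∧ f = fun x => ∑ k, c k * exp (ℓ k x)

theorem isNonnegExpSum_const_mul_exp {c : ℝ} (hc : 0 ≤ c) (ℓ : E →ₗ[ℝ] ℝ) :
    IsNonnegExpSum fun x => c * exp (ℓ x) :=
  ⟨Unit, inferInstance, fun _ => c, fun _ => ℓ, fun _ => hc, by simp⟩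

theorem IsNonnegExpSum.add {f f' : E → ℝ} (hf : IsNonnegExpSum f) (hf' : IsNonnegExpSum f') :
    IsNonnegExpSum (f + f') := by
  obtain ⟨κ, _, c, ℓ, hc, rfl⟩ := hf
  obtain ⟨κ', _, c', ℓ', hc', rfl⟩ := hf'
  refine ⟨κ ⊕ κ', inferInstance, Sum.elim c c', Sum.elim ℓ ℓ', ?_, ?_⟩
  · rintro (k | k)
    exacts [hc k, hc' k]
  · ext x
    simp [Fintype.sum_sum_type]

theorem IsNonnegExpSum.mul {f f' : E → ℝ} (hf : IsNonnegExpSum f) (hf' : IsNonnegExpSum f') :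
    IsNonnegExpSum (f * f') := by
  obtain ⟨κ, _, c, ℓ, hc, rfl⟩ := hf
  obtain ⟨κ', _, c', ℓ', hc', rfl⟩ := hf'
  refine ⟨κ × κ', inferInstance, fun k => c k.1 * c' k.2, fun k => ℓ k.1 + ℓ' k.2,
    fun k => mul_nonneg (hc k.1) (hc' k.2), ?_⟩
  ext x
  simp only [Pi.mul_apply, Fintype.sum_mul_sum, Fintype.sum_prod_type, LinearMap.add_apply,
    exp_add]
  exact Finset.sum_congr rfl fun _ _ => Finset.sum_congr rfl fun _ _ => by ring

variable (E) in
def nonnegExpSums : Subsemiring (E → ℝ) where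
  carrier := {f | IsNonnegExpSum f}
  mul_mem' := IsNonnegExpSum.mul
  one_mem' := by
    have h := isNonnegExpSum_const_mul_exp (E := E) zero_le_one 0
    simp only [LinearMap.zero_apply, exp_zero, mul_one] at h
    exact h
  add_mem' := IsNonnegExpSum.add
  zero_mem' := by
    have h := isNonnegExpSum_const_mul_exp (E := E) le_rfl 0
    simp only [zero_mul] at h
    exact h

theorem convexOn_of_mem_nonnegExpSums {f : E → ℝ} (hf : f ∈ nonnegExpSums E) :
    ConvexOn ℝ Set.univ f := by
  obtain ⟨κ, _, c, ℓ, hc, rfl⟩ := hf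
  have := convexOn_finset_sum convex_univ Finset.univ fun k _ =>
    (convexOn_exp.comp_linearMap (ℓ k)).smul (hc k)
  simpa [Finset.sum_fn, Function.comp_def] using this

end NonnegExpSum

theorem g_eq_prod {n : ℕ} (A : Matrix (Fin n) (Fin n) ℝ) (p : Fin n → ℝ) :
    g A p = ∏ i, ((fun x => p i * exp (-x i)) + ∑ j, fun x => A i j * exp (x j - x i)) := by
  ext x
  simp only [g, Finset.prod_apply, Pi.add_apply, Finset.sum_apply, exp_sub, exp_neg, mul_add,
    Finset.mul_sum]
  refine Finset.prod_congr rfl fun i _ => congrArg₂ (· + ·) (by ring) ?_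
  exact Finset.sum_congr rfl fun j _ => by field_simp

theorem stmt3_general {n : ℕ} (A : Matrix (Fin n) (Fin n) ℝ)
    (p : Fin n → ℝ) (hA : ∀ i j, 0 ≤ A i j) (hp : ∀ i, 0 ≤ p i) :
    ConvexOn ℝ Set.univ (g A p) := by
  apply convexOn_of_mem_nonnegExpSums
  rw [g_eq_prod]
  refine prod_mem fun i _ => add_mem ?_ (sum_mem fun j _ => ?_)
  · exact isNonnegExpSum_const_mul_exp (hp i) (-LinearMap.proj i : (Fin n → ℝ) →ₗ[ℝ] ℝ)
  · exact isNonnegExpSum_const_mul_exp (hA i j)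
      ((LinearMap.proj j : (Fin n → ℝ) →ₗ[ℝ] ℝ) - LinearMap.proj i)

theorem stmt3 {n : ℕ} (hn : 1 ≤ n) (A : Matrix (Fin n) (Fin n) ℝ)
    (p : Fin n → ℝ) (hA : ∀ i j, 0 ≤ A i j) (hp : ∀ i, 0 ≤ p i) :
    ConvexOn ℝ Set.univ (g A p) :=
  stmt3_general A p hA hp
end

section
/- Let n ≥ 2, A ∈ ℝ₊^{n×n} with all diagonal entries positive, p ∈ ℝ₊ⁿ, γ ∈ ℝ, and suppose A is irreducible or the (n+1)×(n+1) matrix à = [[A, p],[𝟙ᵀ, 1]] (last row all ones) is irreducible. Define g(x) = ∏ᵢ e^{−xᵢ}(pᵢ + Σⱼ A_{i,j} e^{xⱼ}) and V_γ = {x ∈ ℝⁿ : Σᵢ xᵢ = γ}. Then for every x ∈ V_γ and every nonzero h with Σᵢ hᵢ = 0, the second directional derivative satisfies g''(x)h² > 0; in particular g is strictly convex on V_γ. -/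
def Irred {m : ℕ} (M : Matrix (Fin m) (Fin m) ℝ) : Prop :=
  ∀ r s : Fin m, r ≠ s → ∃ (k : ℕ) (i : Fin (k+1) → Fin m),
    Function.Injective i ∧ i 0 = r ∧ i (Fin.last k) = s ∧
    ∀ j : Fin k, 0 < M (i j.castSucc) (i j.succ)

/-- The augmented matrix [[A, p],[𝟙ᵀ, 1]]. -/
def aug {n : ℕ} (A : Matrix (Fin n) (Fin n) ℝ) (p : Fin n → ℝ) :
    Matrix (Fin (n+1)) (Fin (n+1)) ℝ := fun i j =>
  if hi : (i : ℕ) < n then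
    (if hj : (j : ℕ) < n then A ⟨i, hi⟩ ⟨j, hj⟩ else p ⟨i, hi⟩)
  else 1

/-!
Expanding the product, `g (x + t • h) = ∑_σ D_σ exp (E_σ t)`, where `σ` chooses for each row `i`
either a column `j` or the extra column `p`, `D_σ ≥ 0`, and `E_σ = ∑ i (h (σ i) - h i)` with `h`
read as `0` at the extra column. So the second derivative along `h` is
`∑_σ D_σ E_σ² exp (E_σ t) ≥ 0`. Since the diagonal of `A` is positive, the choice `σ i = i` has
`D_σ > 0` and `E_σ = 0`; changing it at a single row `i` to a positive entry `j` gives a positive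
term with `E_σ = h j - h i`. If all of these vanished, `h` would be constant along positive
entries, so by irreducibility `h` would be constant (hence `0`, as `∑ h = 0`) or, in the augmented
case, `0` outright. Strict convexity on `V_γ` follows from positivity of the second derivative
along each line of `V_γ`.
-/

open Finset Real

section ExpSum

variable {ι : Type*} [Fintype ι]

lemma hasDerivAt_sum_mul_exp (D E : ι → ℝ) (t : ℝ) :
    HasDerivAt (fun t ↦ ∑ σ, D σ * exp (E σ * t)) (∑ σ, D σ * E σ * exp (E σ * t)) t := by
  refine HasDerivAt.fun_sum fun σ _ ↦ ?_
  exact ((((hasDerivAt_id' t).const_mul (E σ)).exp).const_mul (D σ)).congr_deriv (by ring)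

lemma deriv_deriv_sum_mul_exp (D E : ι → ℝ) (t : ℝ) :
    deriv (deriv fun t ↦ ∑ σ, D σ * exp (E σ * t)) t = ∑ σ, D σ * E σ ^ 2 * exp (E σ * t) := by
  have hD : deriv (fun t ↦ ∑ σ, D σ * exp (E σ * t)) = fun t ↦ ∑ σ, D σ * E σ * exp (E σ * t) :=
    funext fun t ↦ (hasDerivAt_sum_mul_exp D E t).deriv
  rw [hD, (hasDerivAt_sum_mul_exp (fun σ ↦ D σ * E σ) E t).deriv]
  simp only [mul_assoc, sq]

lemma deriv_deriv_sum_mul_exp_pos {D E : ι → ℝ} (hD : ∀ σ, 0 ≤ D σ) {σ₀ : ι} (hD₀ : 0 < D σ₀)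
    (hE₀ : E σ₀ ≠ 0) (t : ℝ) : 0 < deriv (deriv fun t ↦ ∑ σ, D σ * exp (E σ * t)) t := by
  rw [deriv_deriv_sum_mul_exp]
  refine sum_pos' (fun σ _ ↦ by have := hD σ; positivity) ⟨σ₀, mem_univ _, by positivity⟩

lemma prod_sum_mul_exp {κ : Type*} [Fintype κ] [DecidableEq ι] (c e : ι → κ → ℝ) (t : ℝ) :
    ∏ i, ∑ k, c i k * exp (e i k * t) =
      ∑ σ : ι → κ, (∏ i, c i (σ i)) * exp ((∑ i, e i (σ i)) * t) := by
  simp only [Fintype.prod_sum, prod_mul_distrib, sum_mul, exp_sum]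

lemma exists_prod_pos_sum_ne_zero {κ : Type*} [DecidableEq ι] {c e : ι → κ → ℝ}
    (d : ι → κ) (hc : ∀ i, 0 < c i (d i)) (he : ∀ i, e i (d i) = 0) {i₀ : ι} {k₀ : κ}
    (hc₀ : 0 < c i₀ k₀) (he₀ : e i₀ k₀ ≠ 0) :
    ∃ σ : ι → κ, 0 < ∏ i, c i (σ i) ∧ ∑ i, e i (σ i) ≠ 0 := by
  refine ⟨Function.update d i₀ k₀, prod_pos fun i _ ↦ ?_, ?_⟩
  · rcases eq_or_ne i i₀ with rfl | hi
    · simpa using hc₀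
    · simpa [hi] using hc i
  · rwa [Fintype.sum_eq_single i₀ fun i hi ↦ by simp [hi, he], Function.update_self]

end ExpSum

lemma strictConvexOn_of_forall_line {E : Type*} [AddCommGroup E] [Module ℝ E] {s : Set E}
    {f : E → ℝ} (hs : Convex ℝ s)
    (hf : ∀ x ∈ s, ∀ y ∈ s, x ≠ y → StrictConvexOn ℝ Set.univ fun t : ℝ ↦ f (x + t • (y - x))) :
    StrictConvexOn ℝ s f := by
  refine ⟨hs, fun x hx y hy hxy a b ha hb hab ↦ ?_⟩
  have key := (hf x hx y hy hxy).2 (Set.mem_univ 0) (Set.mem_univ 1) zero_ne_one ha hb hab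
  have hseg : x + b • (y - x) = a • x + b • y := by
    rw [eq_sub_of_add_eq hab, smul_sub, sub_smul, one_smul]
    abel
  simpa [hseg] using key

section Irreducible

variable {m : ℕ} {M : Matrix (Fin m) (Fin m) ℝ}

lemma Irred.induction (hM : Irred M) {P : Fin m → Prop} {r s : Fin m} (hr : P r)
    (step : ∀ i j, i ≠ s → 0 < M i j → P i → P j) : P s := by
  rcases eq_or_ne r s with rfl | hrs
  · exact hr
  obtain ⟨k, v, hv, rfl, rfl, hpos⟩ := hM r s hrs
  suffices ∀ j, P (v j) from this (Fin.last k)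
  intro j
  induction j using Fin.induction with
  | zero => exact hr
  | succ j ih => exact step _ _ (hv.ne (Fin.castSucc_lt_last j).ne) (hpos j) ih

lemma Irred.apply_eq_of_forall_pos {α : Type*} (hM : Irred M) {h : Fin m → α}
    (hh : ∀ i j, 0 < M i j → h j = h i) (r s : Fin m) : h r = h s :=
  hM.induction (P := fun i ↦ h r = h i) rfl fun i j _ hij hi ↦ hi.trans (hh i j hij).symm

end Irreducible

section Augmented

variable {n : ℕ} {A : Matrix (Fin n) (Fin n) ℝ} {p : Fin n → ℝ}

/-- Row `i` of `aug A p`, with the extra column `n` indexed by `none`. -/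
def augRow (A : Matrix (Fin n) (Fin n) ℝ) (p : Fin n → ℝ) (i : Fin n) (o : Option (Fin n)) : ℝ :=
  o.elim (p i) (A i)

lemma augRow_nonneg (hA : ∀ i j, 0 ≤ A i j) (hp : ∀ i, 0 ≤ p i) (i : Fin n)
    (o : Option (Fin n)) : 0 ≤ augRow A p i o := by
  cases o
  exacts [hp i, hA i _]

@[simp]
lemma aug_castSucc_castSucc (i j : Fin n) : aug A p i.castSucc j.castSucc = A i j := by
  simp [aug]

@[simp]
lemma aug_castSucc_last (i : Fin n) : aug A p i.castSucc (Fin.last n) = p i := by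
  simp [aug]

lemma eq_zero_of_irred {h : Fin n → ℝ} (hirr : Irred A) (hh : ∀ i j, 0 < A i j → h j = h i)
    (hsum : ∑ i, h i = 0) : h = 0 := by
  funext r
  have hconst : ∀ s, h s = h r := fun s ↦ hirr.apply_eq_of_forall_pos hh s r
  rw [sum_congr rfl fun s _ ↦ hconst s, sum_const, card_univ,
    Fintype.card_fin, nsmul_eq_mul] at hsum
  exact (mul_eq_zero.mp hsum).resolve_left (Nat.cast_ne_zero.mpr (Fin.pos r).ne')

lemma eq_zero_of_irred_aug {h : Fin n → ℝ} (hirr : Irred (aug A p))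
    (hh : ∀ i o, 0 < augRow A p i o → o.elim 0 h = h i) : h = 0 := by
  funext r
  -- Extend `h` by `0` at the extra vertex and follow a path to it: only edges leaving the first
  -- `n` vertices are used, and their weights are entries of `A` or `p`.
  have key := hirr.induction (P := fun k ↦ Fin.lastCases (motive := fun _ ↦ ℝ) 0 h k = h r)
    (r := r.castSucc) (s := Fin.last n) (by simp) fun i j hi hij hPi ↦ by
      obtain ⟨i, rfl⟩ := Fin.exists_castSucc_eq.mpr hi
      induction j using Fin.lastCases with
      | last => simpa [← (hh i none (by simpa [augRow] using hij) : 0 = h i)] using hPi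
      | cast j => simpa [← (hh i (some j) (by simpa [augRow] using hij) : h j = h i)] using hPi
  simpa using key.symm

lemma exists_augRow_pos_ne {h : Fin n → ℝ}
    (hirr : Irred A ∨ Irred (aug A p)) (hsum : ∑ i, h i = 0) (hne : h ≠ 0) :
    ∃ i o, 0 < augRow A p i o ∧ o.elim 0 h ≠ h i := by
  by_contra! hh
  rcases hirr with hirr | hirr
  · exact hne (eq_zero_of_irred hirr (fun i j ↦ hh i (some j)) hsum)
  · exact hne (eq_zero_of_irred_aug hirr hh)

lemma g_eq_prod_sum (x : Fin n → ℝ) :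
    g A p x = ∏ i, ∑ o : Option (Fin n), augRow A p i o * exp (o.elim 0 x - x i) := by
  refine prod_congr rfl fun i _ ↦ ?_
  simp only [Fintype.sum_option, augRow, Option.elim_none, Option.elim_some, exp_zero, exp_neg,
    exp_sub, mul_add, mul_sum]
  congr 1
  · ring
  · exact sum_congr rfl fun j _ ↦ by ring

lemma g_add_smul (x h : Fin n → ℝ) (t : ℝ) :
    g A p (x + t • h) = ∏ i, ∑ o : Option (Fin n),
      augRow A p i o * exp (o.elim 0 x - x i) * exp ((o.elim 0 h - h i) * t) := by
  rw [g_eq_prod_sum]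
  refine prod_congr rfl fun i _ ↦ sum_congr rfl fun o _ ↦ ?_
  rw [mul_assoc, ← exp_add]
  congr 2
  cases o <;> simp only [Option.elim_none, Option.elim_some, Pi.add_apply, Pi.smul_apply,
    smul_eq_mul] <;> ring

lemma deriv_deriv_g_line_pos (hA : ∀ i j, 0 ≤ A i j) (hp : ∀ i, 0 ≤ p i) (hdiag : ∀ i, 0 < A i i)
    (hirr : Irred A ∨ Irred (aug A p)) (x : Fin n → ℝ) {h : Fin n → ℝ} (hsum : ∑ i, h i = 0)
    (hne : h ≠ 0) (t : ℝ) : 0 < deriv (deriv fun s : ℝ ↦ g A p (x + s • h)) t := by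
  set c : Fin n → Option (Fin n) → ℝ := fun i o ↦ augRow A p i o * exp (o.elim 0 x - x i)
  set e : Fin n → Option (Fin n) → ℝ := fun i o ↦ o.elim 0 h - h i
  have hline : (fun s : ℝ ↦ g A p (x + s • h)) =
      fun s ↦ ∑ σ : Fin n → Option (Fin n), (∏ i, c i (σ i)) * exp ((∑ i, e i (σ i)) * s) :=
    funext fun s ↦ by rw [g_add_smul, prod_sum_mul_exp]
  obtain ⟨i₀, o₀, hpos₀, hne₀⟩ := exists_augRow_pos_ne hirr hsum hne
  -- `σ = some` follows the diagonal: positive coefficient, zero exponent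
  obtain ⟨σ₀, hσ₀, heσ₀⟩ := exists_prod_pos_sum_ne_zero (c := c) (e := e) some
    (fun i ↦ mul_pos (hdiag i) (exp_pos _)) (fun i ↦ sub_self _) (mul_pos hpos₀ (exp_pos _))
    (sub_ne_zero.mpr hne₀)
  rw [hline]
  exact deriv_deriv_sum_mul_exp_pos (ι := Fin n → Option (Fin n))
    (fun σ ↦ prod_nonneg fun i _ ↦ mul_nonneg (augRow_nonneg hA hp i _) (exp_pos _).le)
    hσ₀ heσ₀ t

end Augmented

theorem stmt4_general {n : ℕ} (A : Matrix (Fin n) (Fin n) ℝ)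
    (p : Fin n → ℝ) (γ : ℝ)
    (hA : ∀ i j, 0 ≤ A i j) (hp : ∀ i, 0 ≤ p i)
    (hdiag : ∀ i, 0 < A i i)
    (hirr : Irred A ∨ Irred (aug A p)) :
    (∀ x : Fin n → ℝ, (∑ i, x i) = γ → ∀ h : Fin n → ℝ, (∑ i, h i) = 0 →
      h ≠ 0 → 0 < deriv (deriv fun t : ℝ => g A p (x + t • h)) 0) ∧
    StrictConvexOn ℝ {x : Fin n → ℝ | (∑ i, x i) = γ} (g A p) := by
  have hpos := deriv_deriv_g_line_pos hA hp hdiag hirr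
  refine ⟨fun x _ h hsum hne ↦ hpos x hsum hne 0, ?_⟩
  have hV : Convex ℝ {x : Fin n → ℝ | (∑ i, x i) = γ} :=
    convex_hyperplane (f := fun x : Fin n → ℝ ↦ ∑ i, x i)
      ⟨fun _ _ ↦ sum_add_distrib, fun _ _ ↦ by simp [mul_sum]⟩ γ
  refine strictConvexOn_of_forall_line hV fun x hx y hy hxy ↦
    strictConvexOn_univ_of_deriv2_pos (by unfold g; fun_prop)
      (hpos x ?_ (sub_ne_zero.mpr hxy.symm))
  simp only [Pi.sub_apply, sum_sub_distrib, hx.out, hy.out, sub_self]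

theorem stmt4 {n : ℕ} (hn : 2 ≤ n) (A : Matrix (Fin n) (Fin n) ℝ)
    (p : Fin n → ℝ) (γ : ℝ)
    (hA : ∀ i j, 0 ≤ A i j) (hp : ∀ i, 0 ≤ p i)
    (hdiag : ∀ i, 0 < A i i)
    (hirr : Irred A ∨ Irred (aug A p)) :
    (∀ x : Fin n → ℝ, (∑ i, x i) = γ → ∀ h : Fin n → ℝ, (∑ i, h i) = 0 →
      h ≠ 0 → 0 < deriv (deriv fun t : ℝ => g A p (x + t • h)) 0) ∧
    StrictConvexOn ℝ {x : Fin n → ℝ | (∑ i, x i) = γ} (g A p) :=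
  stmt4_general A p γ hA hp hdiag hirr
end

section
/- Let n ≥ 2, γ ∈ ℝ, and suppose A ∈ ℝ^{n×n} together with p ∈ ℝ₊ⁿ admits (after conjugation by a permutation) the block structure A = [[X, 0],[Z, Y]] with p supported on the second block, i.e., à = [[A,p],[𝟙ᵀ,1]] has the form [[X,0,0],[Z,Y,p̄],[𝟙ᵀ,𝟙ᵀ,1]]. Write x = (x⁽¹⁾, x⁽²⁾) ∈ ℝ^{n₁} × ℝ^{n₂}. Then for every x > 0, E_{A,p}(x) = (∏_{i=1}^{n₁}(Xx⁽¹⁾)ᵢ/x⁽¹⁾ᵢ)·(∏_{i=1}^{n₂}(Zx⁽¹⁾ + Yx⁽²⁾ + p̄)ᵢ/x⁽²⁾ᵢ), and if moreover Zx⁽¹⁾ ≠ 0 or p̄ ≠ 0 at a point x > 0 with ∏ᵢ xᵢ = e^γ, then E_{A,p}(x) > E_{X,0}(x⁽¹⁾)·E_{Y,0}(x⁽²⁾). -/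
/-! With `A = [[X, 0], [Z, Y]]` and `p = (0, p̄)`, the factors of `E_{A,p}` indexed by the
first block only see `X`, while those indexed by the second block are the factors of
`E_{Y, Zx⁽¹⁾ + p̄}`. Every factor is positive, and increasing the affine term increases a
factor, so `E_{Y, Zx⁽¹⁾ + p̄} > E_{Y,0}` as soon as `Zx⁽¹⁾ + p̄ ≠ 0`. -/

open Matrix

noncomputable def Efun {ι : Type*} [Fintype ι] (A : Matrix ι ι ℝ) (p : ι → ℝ)
    (η : ι → ℝ) : ℝ :=
  ∏ i, (η i)⁻¹ * (p i + ∑ j, A i j * η j)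

section

variable {ι : Type*} [Fintype ι] {A : Matrix ι ι ℝ} {η : ι → ℝ}

lemma Efun_factor_pos (hA : ∀ i j, 0 ≤ A i j) (hAd : ∀ i, 0 < A i i) (hη : ∀ i, 0 < η i)
    {p : ι → ℝ} (hp : ∀ i, 0 ≤ p i) (i : ι) :
    0 < (η i)⁻¹ * (p i + ∑ j, A i j * η j) := by
  have hsum : 0 < ∑ j, A i j * η j :=
    Finset.sum_pos' (fun j _ => mul_nonneg (hA i j) (hη j).le)
      ⟨i, Finset.mem_univ i, mul_pos (hAd i) (hη i)⟩
  exact mul_pos (inv_pos.mpr (hη i)) (add_pos_of_nonneg_of_pos (hp i) hsum)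

lemma Efun_pos (hA : ∀ i j, 0 ≤ A i j) (hAd : ∀ i, 0 < A i i) (hη : ∀ i, 0 < η i)
    {p : ι → ℝ} (hp : ∀ i, 0 ≤ p i) : 0 < Efun A p η :=
  Finset.prod_pos fun i _ => Efun_factor_pos hA hAd hη hp i

lemma Efun_lt_Efun_of_le_of_exists_lt (hA : ∀ i j, 0 ≤ A i j) (hAd : ∀ i, 0 < A i i)
    (hη : ∀ i, 0 < η i) {p q : ι → ℝ} (hp : ∀ i, 0 ≤ p i) (hpq : p ≤ q)
    (hlt : ∃ i, p i < q i) :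
    Efun A p η < Efun A q η := by
  obtain ⟨i₀, hi₀⟩ := hlt
  refine Finset.prod_lt_prod (fun i _ => Efun_factor_pos hA hAd hη hp i) (fun i _ => ?_)
    ⟨i₀, Finset.mem_univ i₀, ?_⟩
  · exact mul_le_mul_of_nonneg_left (by linarith [hpq i]) (inv_nonneg.mpr (hη i).le)
  · exact mul_lt_mul_of_pos_left (by linarith) (inv_pos.mpr (hη i₀))

end

lemma Efun_fromBlocks_zero {ι κ : Type*} [Fintype ι] [Fintype κ] (X : Matrix ι ι ℝ)
    (Z : Matrix κ ι ℝ) (Y : Matrix κ κ ℝ) (q : κ → ℝ) (x : ι → ℝ) (y : κ → ℝ) :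
    Efun (fromBlocks X 0 Z Y) (Sum.elim 0 q) (Sum.elim x y) =
      Efun X 0 x * Efun Y (Z *ᵥ x + q) y := by
  simp only [Efun, Fintype.prod_sum_type, Fintype.sum_sum_type, fromBlocks_apply₁₁,
    fromBlocks_apply₁₂, fromBlocks_apply₂₁, fromBlocks_apply₂₂, Sum.elim_inl, Sum.elim_inr,
    Pi.add_apply, mulVec, dotProduct, Matrix.zero_apply, zero_mul, Finset.sum_const_zero, add_zero,
    Pi.zero_apply]
  congr 1
  refine Finset.prod_congr rfl fun i _ => ?_
  ring

theorem stmt13_general {n₁ n₂ : ℕ}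
    (γ : ℝ)
    (X : Matrix (Fin n₁) (Fin n₁) ℝ) (Y : Matrix (Fin n₂) (Fin n₂) ℝ)
    (Z : Matrix (Fin n₂) (Fin n₁) ℝ) (pb : Fin n₂ → ℝ)
    (hX : ∀ i j, 0 ≤ X i j) (hY : ∀ i j, 0 ≤ Y i j) (hZ : ∀ i j, 0 ≤ Z i j)
    (hpb : ∀ i, 0 ≤ pb i) (hXd : ∀ i, 0 < X i i) (hYd : ∀ i, 0 < Y i i)
    -- the block matrix A = [[X,0],[Z,Y]] on indices Fin n₁ ⊕ Fin n₂ and the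
    -- vector p = (0, pb):
    (A : Matrix (Fin n₁ ⊕ Fin n₂) (Fin n₁ ⊕ Fin n₂) ℝ)
    (hA : A = Matrix.fromBlocks X (0 : Matrix (Fin n₁) (Fin n₂) ℝ) Z Y)
    (p : Fin n₁ ⊕ Fin n₂ → ℝ) (hp : p = Sum.elim (fun _ : Fin n₁ => (0:ℝ)) pb)
    (x : Fin n₁ → ℝ) (y : Fin n₂ → ℝ) (hx : ∀ i, 0 < x i) (hy : ∀ i, 0 < y i) :
    Efun A p (Sum.elim x y) =
      (∏ i, (x i)⁻¹ * (∑ j, X i j * x j)) *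
        (∏ i, (y i)⁻¹ * ((∑ j, Z i j * x j) + (∑ j, Y i j * y j) + pb i)) ∧
    (((∃ i, (∑ j, Z i j * x j) ≠ 0) ∨ pb ≠ 0) →
      (∏ i, x i) * (∏ i, y i) = Real.exp γ →
      Efun X (0 : Fin n₁ → ℝ) x * Efun Y (0 : Fin n₂ → ℝ) y < Efun A p (Sum.elim x y)) := by
  have hblocks : Efun A p (Sum.elim x y) = Efun X 0 x * Efun Y (Z *ᵥ x + pb) y := by
    subst hA hp
    exact Efun_fromBlocks_zero X Z Y pb x y
  refine ⟨?_, fun hne _ => ?_⟩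
  · rw [hblocks]
    simp only [Efun, Pi.zero_apply, zero_add, Pi.add_apply, mulVec, dotProduct]
    congr 1
    exact Finset.prod_congr rfl fun i _ => by ring
  have hZx : ∀ i, 0 ≤ (Z *ᵥ x) i := fun i =>
    Finset.sum_nonneg (s := Finset.univ) fun j _ => mul_nonneg (hZ i j) (hx j).le
  have hshift : ∃ i, (0 : Fin n₂ → ℝ) i < (Z *ᵥ x + pb) i := by
    rcases hne with ⟨i, hi⟩ | hi
    · exact ⟨i, add_pos_of_pos_of_nonneg ((hZx i).lt_of_ne' hi) (hpb i)⟩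
    · obtain ⟨i, hi⟩ := Function.ne_iff.mp hi
      exact ⟨i, add_pos_of_nonneg_of_pos (hZx i) ((hpb i).lt_of_ne' hi)⟩
  rw [hblocks]
  exact mul_lt_mul_of_pos_left
    (Efun_lt_Efun_of_le_of_exists_lt hY hYd hy (fun _ => le_rfl)
      (fun i => add_nonneg (hZx i) (hpb i)) hshift)
    (Efun_pos hX hXd hx fun _ => le_rfl)

theorem stmt13 {n₁ n₂ : ℕ} (hn₁ : 1 ≤ n₁) (hn₂ : 1 ≤ n₂) (hn : 2 ≤ n₁ + n₂)
    (γ : ℝ)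
    (X : Matrix (Fin n₁) (Fin n₁) ℝ) (Y : Matrix (Fin n₂) (Fin n₂) ℝ)
    (Z : Matrix (Fin n₂) (Fin n₁) ℝ) (pb : Fin n₂ → ℝ)
    (hX : ∀ i j, 0 ≤ X i j) (hY : ∀ i j, 0 ≤ Y i j) (hZ : ∀ i j, 0 ≤ Z i j)
    (hpb : ∀ i, 0 ≤ pb i) (hXd : ∀ i, 0 < X i i) (hYd : ∀ i, 0 < Y i i)
    -- the block matrix A = [[X,0],[Z,Y]] on indices Fin n₁ ⊕ Fin n₂ and the
    -- vector p = (0, pb):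
    (A : Matrix (Fin n₁ ⊕ Fin n₂) (Fin n₁ ⊕ Fin n₂) ℝ)
    (hA : A = Matrix.fromBlocks X (0 : Matrix (Fin n₁) (Fin n₂) ℝ) Z Y)
    (p : Fin n₁ ⊕ Fin n₂ → ℝ) (hp : p = Sum.elim (fun _ : Fin n₁ => (0:ℝ)) pb)
    (x : Fin n₁ → ℝ) (y : Fin n₂ → ℝ) (hx : ∀ i, 0 < x i) (hy : ∀ i, 0 < y i) :
    Efun A p (Sum.elim x y) =
      (∏ i, (x i)⁻¹ * (∑ j, X i j * x j)) *
        (∏ i, (y i)⁻¹ * ((∑ j, Z i j * x j) + (∑ j, Y i j * y j) + pb i)) ∧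
    (((∃ i, (∑ j, Z i j * x j) ≠ 0) ∨ pb ≠ 0) →
      (∏ i, x i) * (∏ i, y i) = Real.exp γ →
      Efun X (0 : Fin n₁ → ℝ) x * Efun Y (0 : Fin n₂ → ℝ) y < Efun A p (Sum.elim x y)) :=
  stmt13_general γ X Y Z pb hX hY hZ hpb hXd hYd A hA p hp x y hx hy
end

section
/- Let S₁ = (X₁, U₁, F₁) and S₂ = (X₂, U₂, F₂) be systems (Fᵢ : Xᵢ × Uᵢ ⇉ Xᵢ set-valued) with U₂ ⊆ U₁, and let Q ⊆ X₁ × X₂ and Q' ⊆ X₂ × X₃ be feedback refinement relations from S₁ to S₂ and from S₂ to S₃ respectively (with U₃ ⊆ U₂). Then the composition Q' ∘ Q is a feedback refinement relation from S₁ to S₃. -/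
/-- `US F x` is the set of inputs admissible at `x`. -/
def US {X U : Type*} (F : X → U → Set X) (x : X) : Set U := {u | F x u ≠ ∅}

/-- `Q` is a feedback refinement relation from `(X₁,U,F₁)` to `(X₂,U,F₂)`. -/
def FRR {X₁ X₂ U : Type*} (F₁ : X₁ → U → Set X₁) (F₂ : X₂ → U → Set X₂)
    (Q : X₁ → X₂ → Prop) : Prop :=
  (∀ x₁, ∃ x₂, Q x₁ x₂) ∧
  ∀ x₁ x₂, Q x₁ x₂ →
    (US F₂ x₂ ⊆ US F₁ x₁ ∧
      ∀ u ∈ US F₂ x₂, ∀ y₁ ∈ F₁ x₁ u, ∀ y₂, Q y₁ y₂ → y₂ ∈ F₂ x₂ u)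

namespace FRR

variable {X₁ X₂ X₃ U : Type*} {F₁ : X₁ → U → Set X₁} {F₂ : X₂ → U → Set X₂}
  {F₃ : X₃ → U → Set X₃} {Q : X₁ → X₂ → Prop} {Q' : X₂ → X₃ → Prop}

theorem leftTotal (h : FRR F₁ F₂ Q) : Relator.LeftTotal Q := h.1

theorem us_subset (h : FRR F₁ F₂ Q) {x₁ : X₁} {x₂ : X₂} (hx : Q x₁ x₂) :
    US F₂ x₂ ⊆ US F₁ x₁ :=
  (h.2 x₁ x₂ hx).1

theorem mem_of_rel_succ (h : FRR F₁ F₂ Q) {x₁ y₁ : X₁} {x₂ y₂ : X₂} {u : U}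
    (hx : Q x₁ x₂) (hu : u ∈ US F₂ x₂) (hy₁ : y₁ ∈ F₁ x₁ u) (hy : Q y₁ y₂) :
    y₂ ∈ F₂ x₂ u :=
  (h.2 x₁ x₂ hx).2 u hu y₁ hy₁ y₂ hy

theorem comp (hQ : FRR F₁ F₂ Q) (hQ' : FRR F₂ F₃ Q') :
    FRR F₁ F₃ (Relation.Comp Q Q') := by
  refine ⟨hQ.leftTotal.trans (fun _ b _ hab hbc ↦ ⟨b, hab, hbc⟩) hQ'.leftTotal, ?_⟩
  rintro x₁ x₃ ⟨x₂, hx₁₂, hx₂₃⟩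
  refine ⟨(hQ'.us_subset hx₂₃).trans (hQ.us_subset hx₁₂), ?_⟩
  rintro u hu y₁ hy₁ y₃ ⟨y₂, hy₁₂, hy₂₃⟩
  exact hQ'.mem_of_rel_succ hx₂₃ hu
    (hQ.mem_of_rel_succ hx₁₂ (hQ'.us_subset hx₂₃ hu) hy₁ hy₁₂) hy₂₃

end FRR

theorem stmt17 {X₁ X₂ X₃ U : Type*}
    (F₁ : X₁ → U → Set X₁) (F₂ : X₂ → U → Set X₂) (F₃ : X₃ → U → Set X₃)
    (Q : X₁ → X₂ → Prop) (Q' : X₂ → X₃ → Prop)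
    (hQ : FRR F₁ F₂ Q) (hQ' : FRR F₂ F₃ Q') :
    FRR F₁ F₃ (fun x₁ x₃ => ∃ x₂, Q x₁ x₂ ∧ Q' x₂ x₃) :=
  hQ.comp hQ'
end

section
/- Let n ≥ 2, A ∈ ℝ₊^{n×n} with positive diagonal, p ∈ ℝ₊ⁿ. Suppose for indices r, s ∈ [1;n] (or s = n+1 with convention x_{n+1} = 0) there exist distinct indices i₁,…,i_m ∈ [1;n+1] with i₁ = r, i_m = s and Ã_{i_k, i_{k+1}} > 0 for all k < m, where à = [[A, p],[0, 1]]. Let μ be the smallest nonzero entry among the entries of A and p. Then for every x ∈ ℝⁿ with Σⱼ xⱼ = γ (extended by x_{n+1} = 0), g(x) = e^{−γ} ∏ᵢ (pᵢ + Σⱼ A_{i,j} e^{xⱼ}) satisfies g(x) ≥ μⁿ e^{x_s − x_r}. -/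
/-!
Let `σ` send each vertex of the path (other than `s`) to the next one and fix every other
vertex. Every entry `Ã_{a, σ a}` is positive (a path edge, a diagonal entry of `A`, or the corner
`1`), so factor `i` of the product is at least `μ e^{x_{σ i}}`. As the path is injective,
`∑ₐ (x_{σ a} - x_a)` telescopes along it to `x_s - x_r`, and `σ` fixes `n + 1`, so
`∑ᵢ x_{σ i} = γ + x_s - x_r`.
-/

/-- The augmented matrix [[A, p],[0, 1]]. -/
def aug0 {n : ℕ} (A : Matrix (Fin n) (Fin n) ℝ) (p : Fin n → ℝ) :
    Matrix (Fin (n+1)) (Fin (n+1)) ℝ := fun i j =>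
  if hi : (i : ℕ) < n then
    (if hj : (j : ℕ) < n then A ⟨i, hi⟩ ⟨j, hj⟩ else p ⟨i, hi⟩)
  else (if (j : ℕ) < n then 0 else 1)

/-- `x` extended by `x_{n+1} = 0`. -/
def ext {n : ℕ} (x : Fin n → ℝ) : Fin (n+1) → ℝ := fun i =>
  if h : (i : ℕ) < n then x ⟨i, h⟩ else 0

open Real

noncomputable def pathSucc {α : Type*} [DecidableEq α] {m : ℕ} (f : Fin (m + 1) → α) (a : α) : α :=
  if h : ∃ k : Fin m, f k.castSucc = a then f h.choose.succ else a

section PathSucc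

variable {α : Type*} [DecidableEq α] {m : ℕ} {f : Fin (m + 1) → α}

theorem pathSucc_castSucc (hf : Function.Injective f) (k : Fin m) :
    pathSucc f (f k.castSucc) = f k.succ := by
  have h : ∃ k' : Fin m, f k'.castSucc = f k.castSucc := ⟨k, rfl⟩
  rw [pathSucc, dif_pos h, Fin.castSucc_injective _ (hf h.choose_spec)]

theorem pathSucc_of_forall_ne {a : α} (ha : ∀ k : Fin m, f k.castSucc ≠ a) :
    pathSucc f a = a :=
  dif_neg fun ⟨k, hk⟩ => ha k hk

theorem Fin.sum_succ_sub_castSucc {M : Type*} [AddCommGroup M] (g : Fin (m + 1) → M) :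
    ∑ k : Fin m, (g k.succ - g k.castSucc) = g (Fin.last m) - g 0 := by
  have h := (Fin.sum_univ_succ g).symm.trans (Fin.sum_univ_castSucc g)
  rw [Finset.sum_sub_distrib, sub_eq_sub_iff_add_eq_add, add_comm, h, add_comm]

theorem sum_pathSucc_sub [Fintype α] {M : Type*} [AddCommGroup M] (hf : Function.Injective f)
    (y : α → M) : ∑ a, (y (pathSucc f a) - y a) = y (f (Fin.last m)) - y (f 0) := by
  have hsupp : ∀ a ∈ Finset.univ, a ∉ Finset.univ.image (fun k : Fin m => f k.castSucc) →
      y (pathSucc f a) - y a = 0 := by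
    intro a _ ha
    rw [pathSucc_of_forall_ne fun k hk => ha (Finset.mem_image.2 ⟨k, Finset.mem_univ _, hk⟩),
      sub_self]
  rw [← Finset.sum_subset (Finset.subset_univ _) hsupp,
    Finset.sum_image fun k _ l _ hkl => Fin.castSucc_injective _ (hf hkl)]
  simp only [pathSucc_castSucc hf]
  exact Fin.sum_succ_sub_castSucc (y ∘ f)

end PathSucc

section Augmented

variable {n : ℕ} {A : Matrix (Fin n) (Fin n) ℝ} {p : Fin n → ℝ}

@[simp]
theorem aug0_castSucc_castSucc (i j : Fin n) : aug0 A p i.castSucc j.castSucc = A i j := by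
  simp [aug0]

@[simp]
theorem aug0_castSucc_last (i : Fin n) : aug0 A p i.castSucc (Fin.last n) = p i := by
  simp [aug0]

@[simp]
theorem aug0_last_castSucc (j : Fin n) : aug0 A p (Fin.last n) j.castSucc = 0 := by
  simp [aug0]

@[simp]
theorem aug0_last_last : aug0 A p (Fin.last n) (Fin.last n) = 1 := by
  simp [aug0]

@[simp]
theorem ext_castSucc (x : Fin n → ℝ) (j : Fin n) : ext x j.castSucc = x j := by
  simp [ext]

@[simp]
theorem ext_last (x : Fin n → ℝ) : ext x (Fin.last n) = 0 := by
  simp [ext]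

theorem aug0_nonneg (hA : ∀ i j, 0 ≤ A i j) (hp : ∀ i, 0 ≤ p i) (a b : Fin (n + 1)) :
    0 ≤ aug0 A p a b := by
  induction a using Fin.lastCases <;> induction b using Fin.lastCases <;> simp [hA, hp]

theorem aug0_self_pos (hdiag : ∀ i, 0 < A i i) (a : Fin (n + 1)) : 0 < aug0 A p a a := by
  induction a using Fin.lastCases <;> simp [hdiag]

theorem eq_last_of_aug0_last_pos {b : Fin (n + 1)} (h : 0 < aug0 A p (Fin.last n) b) :
    b = Fin.last n := by
  induction b using Fin.lastCases with
  | last => rfl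
  | cast j => simp at h

theorem le_aug0_of_pos {μ : ℝ}
    (hμ : μ ∈ lowerBounds {y : ℝ | ((∃ i j, A i j = y) ∨ (∃ i, p i = y)) ∧ y ≠ 0})
    {i : Fin n} {b : Fin (n + 1)} (h : 0 < aug0 A p i.castSucc b) :
    μ ≤ aug0 A p i.castSucc b := by
  induction b using Fin.lastCases with
  | last => simp only [aug0_castSucc_last] at h ⊢; exact hμ ⟨Or.inr ⟨i, rfl⟩, h.ne'⟩
  | cast j => simp only [aug0_castSucc_castSucc] at h ⊢; exact hμ ⟨Or.inl ⟨i, j, rfl⟩, h.ne'⟩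

theorem sum_aug0_mul_exp_ext (x : Fin n → ℝ) (i : Fin n) :
    ∑ b, aug0 A p i.castSucc b * exp (ext x b) = p i + ∑ j, A i j * exp (x j) := by
  simp [Fin.sum_univ_castSucc, add_comm]

theorem aug0_mul_exp_ext_le (hA : ∀ i j, 0 ≤ A i j) (hp : ∀ i, 0 ≤ p i) (x : Fin n → ℝ)
    (i : Fin n) (b : Fin (n + 1)) :
    aug0 A p i.castSucc b * exp (ext x b) ≤ p i + ∑ j, A i j * exp (x j) := by
  rw [← sum_aug0_mul_exp_ext]
  exact Finset.single_le_sum (fun c _ => mul_nonneg (aug0_nonneg hA hp _ c) (exp_pos _).le)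
    (Finset.mem_univ b)

end Augmented

theorem pow_card_mul_exp_sum_le_prod {ι : Type*} [Fintype ι] {μ : ℝ} (hμ : 0 ≤ μ)
    (z F : ι → ℝ) (h : ∀ i, μ * exp (z i) ≤ F i) :
    μ ^ Fintype.card ι * exp (∑ i, z i) ≤ ∏ i, F i := by
  calc μ ^ Fintype.card ι * exp (∑ i, z i) = ∏ i, μ * exp (z i) := by
        rw [Finset.prod_mul_distrib, Finset.prod_const, Finset.card_univ, exp_sum]
    _ ≤ ∏ i, F i := Finset.prod_le_prod (fun i _ => by positivity) fun i _ => h i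

theorem stmt19_general {n : ℕ} (A : Matrix (Fin n) (Fin n) ℝ)
    (p : Fin n → ℝ) (γ μ : ℝ)
    (hA : ∀ i j, 0 ≤ A i j) (hp : ∀ i, 0 ≤ p i) (hdiag : ∀ i, 0 < A i i)
    (hμ : IsLeast {y : ℝ | ((∃ i j, A i j = y) ∨ (∃ i, p i = y)) ∧ y ≠ 0} μ)
    (r s : Fin (n+1))
    (hpath : ∃ (m : ℕ) (i : Fin (m+1) → Fin (n+1)),
      Function.Injective i ∧ i 0 = r ∧ i (Fin.last m) = s ∧
      ∀ k : Fin m, 0 < aug0 A p (i k.castSucc) (i k.succ))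
    (x : Fin n → ℝ) (hx : (∑ j, x j) = γ) :
    μ ^ n * Real.exp (ext x s - ext x r) ≤
      Real.exp (-γ) * ∏ i, (p i + ∑ j, A i j * Real.exp (x j)) := by
  obtain ⟨m, f, hf, rfl, rfl, hpos⟩ := hpath
  have hμpos : 0 < μ := by
    obtain ⟨⟨⟨i, j, rfl⟩ | ⟨i, rfl⟩, hne⟩, -⟩ := hμ
    exacts [(hA i j).lt_of_ne' hne, (hp i).lt_of_ne' hne]
  have hstep : ∀ a, 0 < aug0 A p a (pathSucc f a) := by
    intro a
    by_cases ha : ∃ k : Fin m, f k.castSucc = a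
    · obtain ⟨k, rfl⟩ := ha
      simpa only [pathSucc_castSucc hf] using hpos k
    · rw [pathSucc_of_forall_ne fun k hk => ha ⟨k, hk⟩]
      exact aug0_self_pos hdiag a
  have hrow : ∀ i : Fin n, μ * exp (ext x (pathSucc f i.castSucc)) ≤
      p i + ∑ j, A i j * exp (x j) := fun i =>
    (mul_le_mul_of_nonneg_right (le_aug0_of_pos hμ.2 (hstep _)) (exp_pos _).le).trans
      (aug0_mul_exp_ext_le hA hp x i _)
  have hsum : ∑ i : Fin n, ext x (pathSucc f i.castSucc) =
      γ + (ext x (f (Fin.last m)) - ext x (f 0)) := by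
    have hlast := eq_last_of_aug0_last_pos (hstep (Fin.last n))
    rw [← sum_pathSucc_sub hf, Fin.sum_univ_castSucc, hlast, ← hx]
    simp
  have hprod := pow_card_mul_exp_sum_le_prod hμpos.le _ _ hrow
  rw [Fintype.card_fin, hsum] at hprod
  calc μ ^ n * exp (ext x (f (Fin.last m)) - ext x (f 0))
      = exp (-γ) * (μ ^ n * exp (γ + (ext x (f (Fin.last m)) - ext x (f 0)))) := by
        rw [mul_left_comm, ← exp_add, neg_add_cancel_left]
    _ ≤ _ := mul_le_mul_of_nonneg_left hprod (exp_pos _).le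

theorem stmt19 {n : ℕ} (hn : 2 ≤ n) (A : Matrix (Fin n) (Fin n) ℝ)
    (p : Fin n → ℝ) (γ μ : ℝ)
    (hA : ∀ i j, 0 ≤ A i j) (hp : ∀ i, 0 ≤ p i) (hdiag : ∀ i, 0 < A i i)
    (hμ : IsLeast {y : ℝ | ((∃ i j, A i j = y) ∨ (∃ i, p i = y)) ∧ y ≠ 0} μ)
    (r s : Fin (n+1)) (hr : (r : ℕ) < n)
    (hpath : ∃ (m : ℕ) (i : Fin (m+1) → Fin (n+1)),
      Function.Injective i ∧ i 0 = r ∧ i (Fin.last m) = s ∧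
      ∀ k : Fin m, 0 < aug0 A p (i k.castSucc) (i k.succ))
    (x : Fin n → ℝ) (hx : (∑ j, x j) = γ) :
    μ ^ n * Real.exp (ext x s - ext x r) ≤
      Real.exp (-γ) * ∏ i, (p i + ∑ j, A i j * Real.exp (x j)) :=
  stmt19_general A p γ μ hA hp hdiag hμ r s hpath x hx
end
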